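/- arXiv:1001.5073 — 2 statements merged into one kernel-verified Lean document; each statement's English description precedes it below -/
import Mathlib

section
/- Let A be a real n×m matrix with n < m having orthonormal rows (A Aᵀ = I_n). Let k ≥ 1 be an integer, let α > 1 be a real constant, set n0 = ⌈2kα⌉, and assume n0 ≤ n. If α·δ_{n0}^{min} + ‖A‖₂ ≤ α, where δ_{n0}^{min} is the lower asymmetric restricted isometry constant of A and ‖A‖₂ is the spectral norm of A, then γ_A(n0) + 1 ≤ α and consequently 2k·(1 + γ_A(n0)) ≤ n0 (the sparsity condition under which SL0 convergence to the sparsest solution is guaranteed). -/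
open Finset
open scoped BigOperators

noncomputable section

/-- Squared Euclidean norm of a vector. -/
def nsq {ι : Type*} [Fintype ι] (s : ι → ℝ) : ℝ := ∑ i, (s i) ^ 2

/-- The Unique Representation Property: every `n × n` submatrix of `A` is invertible. -/
def URP {n m : ℕ} (A : Matrix (Fin n) (Fin m) ℝ) : Prop :=
  ∀ g : Fin n → Fin m, Function.Injective g → IsUnit (A.submatrix id g)

/-- Number of nonzero components (the ℓ⁰ "norm"). -/
def l0 {ι : Type*} [Fintype ι] (s : ι → ℝ) : ℕ :=
  (Finset.univ.filter fun i => s i ≠ 0).card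

/-- Number of components with absolute value greater than σ. -/
def l0s {ι : Type*} [Fintype ι] (s : ι → ℝ) (σ : ℝ) : ℕ :=
  (Finset.univ.filter fun i => σ < |s i|).card

/-- The set of ratios ‖π_I(s)‖²/‖π_{Iᶜ}(s)‖² over index sets `I` with `|I| ≤ n0`
and nonzero null-space vectors `s`. -/
def gammaSet {n m : ℕ} (A : Matrix (Fin n) (Fin m) ℝ) (n0 : ℕ) : Set ℝ :=
  {r | ∃ (I : Finset (Fin m)) (s : Fin m → ℝ), I.card ≤ n0 ∧ A.mulVec s = 0 ∧ s ≠ 0 ∧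
    r = (∑ i ∈ I, (s i) ^ 2) / (∑ i ∈ Iᶜ, (s i) ^ 2)}

/-- γ_A(n0), the supremum of the above set of ratios. -/
def gammaA {n m : ℕ} (A : Matrix (Fin n) (Fin m) ℝ) (n0 : ℕ) : ℝ :=
  sSup (gammaSet A n0)

/-- Square of the largest singular value of a matrix (Rayleigh quotient form). -/
def sMaxSq {p q : Type*} [Fintype p] [Fintype q] (B : Matrix p q ℝ) : ℝ :=
  sSup {r | ∃ v : q → ℝ, nsq v = 1 ∧ r = nsq (B.mulVec v)}

/-- Square of the smallest singular value of a matrix with at least as many rows as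
columns (Rayleigh quotient form). -/
def sMinSq {p q : Type*} [Fintype p] [Fintype q] (B : Matrix p q ℝ) : ℝ :=
  sInf {r | ∃ v : q → ℝ, nsq v = 1 ∧ r = nsq (B.mulVec v)}

/-- The quadratic spline f_γ. -/
def fsp (γ u : ℝ) : ℝ :=
  if |u| ≤ 1 then 1 - u ^ 2 / (1 + γ)
  else if |u| ≤ 1 + γ then (|u| - γ - 1) ^ 2 / (γ ^ 2 + γ)
  else 0

/-- F_{γ,σ}(s) = Σ_i f_γ(s_i/σ). -/
def Fsp {m : ℕ} (γ σ : ℝ) (s : Fin m → ℝ) : ℝ := ∑ i, fsp γ (s i / σ)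

/-- The piecewise second derivative g_γ of f_γ. -/
def gsp (γ u : ℝ) : ℝ :=
  if |u| ≤ 1 then -2 / (1 + γ)
  else if |u| ≤ 1 + γ then 2 / (γ ^ 2 + γ)
  else 0

/-- The derivative f_γ′. -/
def fspDeriv (γ u : ℝ) : ℝ :=
  if |u| ≤ 1 then -2 * u / (1 + γ)
  else if |u| ≤ 1 + γ then 2 * (|u| - γ - 1) / (γ ^ 2 + γ) * Real.sign u
  else 0

/-- The gradient of F_{γ,σ}: its i-th component is (1/σ)·f_γ′(s_i/σ). -/
def gradF {m : ℕ} (γ σ : ℝ) (s : Fin m → ℝ) : Fin m → ℝ :=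
  fun i => fspDeriv γ (s i / σ) / σ

/-- The lower asymmetric restricted isometry constant δ_k^{min} of `A`. -/
def aricMin {n m : ℕ} (A : Matrix (Fin n) (Fin m) ℝ) (k : ℕ) : ℝ :=
  sInf {δ : ℝ | 0 ≤ δ ∧ ∀ s : Fin m → ℝ, l0 s ≤ k → (1 - δ) * nsq s ≤ nsq (A.mulVec s)}

end

/-!
Since `A Aᵀ = 1`, the matrix `AᵀA` is the orthogonal projection onto the row space of `A`.
Let `δ = δ_{n0}^{min}`. For `s` in the kernel of `A` and `x` its restriction to an index set
`I` with `|I| ≤ n0`, `x ⬝ᵥ s = (x - AᵀA x) ⬝ᵥ s` and `‖x - AᵀA x‖² = ‖x‖² - ‖A x‖² ≤ δ ‖x‖²`,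
so Cauchy–Schwarz gives `‖π_I s‖² ≤ δ ‖s‖²`, i.e. `γ_A(n0) ≤ δ / (1 - δ)`. A row of `A` is a
unit vector mapped to a unit vector, so `‖A‖₂ ≥ 1` and the hypothesis yields `α δ ≤ α - 1`,
which is exactly `δ / (1 - δ) ≤ α - 1`.
-/

open Matrix

lemma nsq_eq_dotProduct {ι : Type*} [Fintype ι] (v : ι → ℝ) : nsq v = v ⬝ᵥ v := by
  simp only [nsq, dotProduct, sq]

lemma nsq_nonneg {ι : Type*} [Fintype ι] (v : ι → ℝ) : 0 ≤ nsq v :=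
  Finset.sum_nonneg fun _ _ => sq_nonneg _

section OrthonormalRows

variable {p q : Type*} [Fintype p] [Fintype q] {A : Matrix p q ℝ}

lemma sq_dotProduct_le_of_mulVec_eq_zero [DecidableEq p] (hA : A * Aᵀ = 1) {s : q → ℝ}
    (hs : A *ᵥ s = 0) (x : q → ℝ) : (x ⬝ᵥ s) ^ 2 ≤ (nsq x - nsq (A *ᵥ x)) * nsq s := by
  set t := x - Aᵀ *ᵥ (A *ᵥ x)
  have hadj : ∀ y w, (Aᵀ *ᵥ y) ⬝ᵥ w = y ⬝ᵥ (A *ᵥ w) := fun y w => by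
    rw [mulVec_transpose, ← dotProduct_mulVec]
  have hadj' : ∀ w y, w ⬝ᵥ (Aᵀ *ᵥ y) = (A *ᵥ w) ⬝ᵥ y := fun w y => by
    rw [dotProduct_comm, hadj, dotProduct_comm]
  have hAt : A *ᵥ (Aᵀ *ᵥ (A *ᵥ x)) = A *ᵥ x := by
    rw [mulVec_mulVec, hA, one_mulVec]
  have hts : t ⬝ᵥ s = x ⬝ᵥ s := by
    rw [sub_dotProduct, hadj, hs, dotProduct_zero, sub_zero]
  have htt : t ⬝ᵥ t = nsq x - nsq (A *ᵥ x) := by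
    simp only [t, nsq_eq_dotProduct, sub_dotProduct, dotProduct_sub, mulVec_sub, hadj, hadj', hAt]
    ring
  rw [← hts, ← htt, nsq_eq_dotProduct]
  simpa only [dotProduct, sq] using Finset.sum_mul_sq_le_sq_mul_sq Finset.univ t s

lemma bddAbove_nsq_mulVec (A : Matrix p q ℝ) :
    BddAbove {r | ∃ v : q → ℝ, nsq v = 1 ∧ r = nsq (A *ᵥ v)} := by
  refine ⟨∑ i, ∑ j, A i j ^ 2, ?_⟩
  rintro r ⟨v, hv, rfl⟩
  refine Finset.sum_le_sum fun i _ => ?_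
  calc (A *ᵥ v) i ^ 2 ≤ (∑ j, A i j ^ 2) * nsq v := by
        simpa only [mulVec, dotProduct, nsq, sq] using
          Finset.sum_mul_sq_le_sq_mul_sq Finset.univ (A i) v
    _ = ∑ j, A i j ^ 2 := by rw [hv, mul_one]

lemma one_le_sMaxSq [DecidableEq p] [Nonempty p] (hA : A * Aᵀ = 1) : 1 ≤ sMaxSq A := by
  obtain ⟨i⟩ := ‹Nonempty p›
  have hrow : A *ᵥ A i = Pi.single i 1 := by
    ext j
    simpa [mul_apply, mulVec, dotProduct, one_apply, Pi.single_apply, mul_comm] using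
      congrFun (congrFun hA j) i
  have hnorm : nsq (A i) = 1 := by
    simpa [mul_apply, nsq, sq] using congrFun (congrFun hA i) i
  refine le_csSup (bddAbove_nsq_mulVec A) ⟨A i, hnorm, ?_⟩
  simp [hrow, nsq, Pi.single_apply]

end OrthonormalRows

section RestrictedIsometry

variable {n m : ℕ} (A : Matrix (Fin n) (Fin m) ℝ)

lemma aricMin_nonneg (k : ℕ) : 0 ≤ aricMin A k :=
  Real.sInf_nonneg fun _ hδ => hδ.1

lemma sub_mul_nsq_le_aricMin {k : ℕ} {v : Fin m → ℝ} (hv : l0 v ≤ k) :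
    (1 - aricMin A k) * nsq v ≤ nsq (A *ᵥ v) := by
  rcases (nsq_nonneg v).eq_or_lt with h | h
  · rw [← h, mul_zero]; exact nsq_nonneg _
  have hne : (1 : ℝ) ∈ {δ : ℝ | 0 ≤ δ ∧ ∀ s : Fin m → ℝ, l0 s ≤ k →
      (1 - δ) * nsq s ≤ nsq (A *ᵥ s)} :=
    ⟨zero_le_one, fun s _ => by simpa using nsq_nonneg (A *ᵥ s)⟩
  have hlow : (nsq v - nsq (A *ᵥ v)) / nsq v ≤ aricMin A k := by
    refine le_csInf ⟨1, hne⟩ fun δ hδ => ?_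
    rw [div_le_iff₀ h]
    linarith [hδ.2 v hv]
  rw [div_le_iff₀ h] at hlow
  linarith

lemma one_sub_aricMin_mul_sum_le (hA : A * Aᵀ = 1) {s : Fin m → ℝ} (hs : A *ᵥ s = 0)
    {I : Finset (Fin m)} {k : ℕ} (hI : I.card ≤ k) :
    (1 - aricMin A k) * ∑ i ∈ I, s i ^ 2 ≤ aricMin A k * ∑ i ∈ Iᶜ, s i ^ 2 := by
  classical
  set x : Fin m → ℝ := fun i => if i ∈ I then s i else 0
  set a := ∑ i ∈ I, s i ^ 2
  set b := ∑ i ∈ Iᶜ, s i ^ 2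
  have hxs : x ⬝ᵥ s = a := by
    simp only [x, dotProduct, ite_mul, zero_mul, Fintype.sum_ite_mem, a, sq]
  have hxx : nsq x = a := by
    simp only [x, nsq, ite_pow, zero_pow two_ne_zero, Fintype.sum_ite_mem, a]
  have hss : nsq s = a + b := Finset.sum_add_sum_compl I _ |>.symm
  have hl0 : l0 x ≤ k := hI.trans' <| Finset.card_le_card fun i hi => by
    by_contra h
    exact (Finset.mem_filter.mp hi).2 (if_neg h)
  have hrip := sub_mul_nsq_le_aricMin A hl0
  have hcs := sq_dotProduct_le_of_mulVec_eq_zero hA hs x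
  rw [hxs, hxx, hss] at hcs
  rw [hxx] at hrip
  have ha : 0 ≤ a := Finset.sum_nonneg fun _ _ => sq_nonneg _
  have hb : 0 ≤ b := Finset.sum_nonneg fun _ _ => sq_nonneg _
  have hδ := aricMin_nonneg A k
  rcases ha.eq_or_lt with h | h
  · rw [← h, mul_zero]; positivity
  · nlinarith

lemma gammaA_le (hA : A * Aᵀ = 1) {k : ℕ} {α : ℝ} (hα : 0 < α)
    (hδ : α * aricMin A k ≤ α - 1) : gammaA A k ≤ α - 1 := by
  have hδ0 := aricMin_nonneg A k
  refine Real.sSup_le ?_ (by nlinarith)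
  rintro r ⟨I, s, hI, hs, -, rfl⟩
  have key := one_sub_aricMin_mul_sum_le A hA hs hI
  have ha : 0 ≤ ∑ i ∈ I, s i ^ 2 := Finset.sum_nonneg fun _ _ => sq_nonneg _
  have hb : 0 ≤ ∑ i ∈ Iᶜ, s i ^ 2 := Finset.sum_nonneg fun _ _ => sq_nonneg _
  -- a zero denominator gives the junk ratio `0`, which `div_le_of_le_mul₀` also covers
  refine div_le_of_le_mul₀ hb (by nlinarith) ?_
  nlinarith [mul_le_mul_of_nonneg_left key hα.le]

end RestrictedIsometry

theorem stmt_14_general {n m : ℕ} (A : Matrix (Fin n) (Fin m) ℝ)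
    (horth : A * A.transpose = 1)
    (k : ℕ) (hk : 1 ≤ k) (α : ℝ) (hα : 1 < α)
    (n0 : ℕ) (hn0def : n0 = ⌈2 * (k : ℝ) * α⌉₊) (hn0 : n0 ≤ n)
    (hcond : α * aricMin A n0 + Real.sqrt (sMaxSq A) ≤ α) :
    gammaA A n0 + 1 ≤ α ∧ 2 * (k : ℝ) * (1 + gammaA A n0) ≤ (n0 : ℝ) := by
  have hkα : 0 < 2 * (k : ℝ) * α := by
    have : (1 : ℝ) ≤ k := by exact_mod_cast hk
    positivity
  have : Nonempty (Fin n) :=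
    Fin.pos_iff_nonempty.mp <| hn0.trans_lt' <| hn0def ▸ Nat.ceil_pos.mpr hkα
  have hnorm : 1 ≤ Real.sqrt (sMaxSq A) := Real.one_le_sqrt.mpr (one_le_sMaxSq horth)
  have hγ := gammaA_le A horth (by linarith) (by linarith : α * aricMin A n0 ≤ α - 1)
  refine ⟨by linarith, ?_⟩
  calc 2 * (k : ℝ) * (1 + gammaA A n0) ≤ 2 * k * α := by gcongr; linarith
    _ ≤ n0 := hn0def ▸ Nat.le_ceil _

/-- if α·δ_{⌈2kα⌉}^{min} + ‖A‖₂ ≤ α for some α > 1, then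
γ_A(n0) + 1 ≤ α for n0 = ⌈2kα⌉, and consequently 2k(1 + γ_A(n0)) ≤ n0. -/
theorem stmt_14 {n m : ℕ} (hnm : n < m) (A : Matrix (Fin n) (Fin m) ℝ)
    (horth : A * A.transpose = 1)
    (k : ℕ) (hk : 1 ≤ k) (α : ℝ) (hα : 1 < α)
    (n0 : ℕ) (hn0def : n0 = ⌈2 * (k : ℝ) * α⌉₊) (hn0 : n0 ≤ n)
    (hcond : α * aricMin A n0 + Real.sqrt (sMaxSq A) ≤ α) :
    gammaA A n0 + 1 ≤ α ∧ 2 * (k : ℝ) * (1 + gammaA A n0) ≤ (n0 : ℝ) :=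
  stmt_14_general A horth k hk α hα n0 hn0def hn0 hcond
end

section
/- Let A be a real n×m matrix with n < m satisfying the URP and having orthonormal rows (A Aᵀ = I_n), let 1 ≤ n0 ≤ n, let γ = γ_A(n0) (finite and positive), γ′ > γ, σ > 0, and x ∈ ℝⁿ. Set F = F_{γ′,σ}, λ′_max = 2/(1+γ), λ′_min = 2(γ′−γ)/((1+γ)(γ′+γ′²)), μ = 2/(λ′_min + λ′_max), and CR′ = (λ′_max − λ′_min)/(λ′_max + λ′_min). Let P denote the orthogonal projection onto the null space of A, and let s_opt ∈ S_x be a global maximizer of F over S_x. If s_i ∈ S_x satisfies F(s_i) ≥ m − n0/(2+2γ′), and s_{i+1} = s_i + μσ²·P∇F(s_i), then ‖s_{i+1} − s_opt‖ ≤ CR′·‖s_i − s_opt‖ and F(s_{i+1}) ≥ F(s_i). -/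
open Finset
open scoped BigOperators

/-!
Let `d = sᵢ - s_opt ∈ ker A`. Coordinatewise, `f_{γ'}′(sᵢ/σ) - f_{γ'}′(s_opt/σ)` is a secant slope
`hₖ ∈ [-2/(1+γ'), 2/(γ'²+γ')]` times the difference of the arguments, and `hₖ = -2/(1+γ')` off the
set `I` of coordinates where `sᵢ` or `s_opt` leaves `[-σ, σ]`; the lower bound on `F(sᵢ)`, inherited
by `s_opt`, gives `|I| ≤ n0`. Since `s_opt` is a constrained maximizer, `P ∇F(s_opt) = 0`, so
`s_{i+1} - s_opt = P (1 + μH) d`. On `ker A` the inequality `‖π_I w‖² ≤ γ ‖π_{Iᶜ} w‖²` bounds the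
quadratic form of `1 + μH` by `CR′ ‖w‖²`, and polarization turns this into the contraction.
For monotonicity, `f_{γ'} + u²/(1+γ')` is convex, so `F` falls short of its linearization by at most
`‖v‖²/(σ²(1+γ'))`; the step `v = μσ² P∇F` gains `μσ² (1 - μ/(1+γ')) ‖P∇F‖² ≥ 0` as `μ ≤ 1 + γ'`.
-/

open Matrix

def softThreshold (t u : ℝ) : ℝ := max (u - t) 0 - max (-u - t) 0

lemma softThreshold_zero (u : ℝ) : softThreshold 0 u = u := by
  simp only [softThreshold, sub_zero, max_def]; split_ifs <;> linarith

lemma softThreshold_sub_nonneg (t : ℝ) {a b : ℝ} (hba : b ≤ a) :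
    0 ≤ softThreshold t a - softThreshold t b := by
  simp only [softThreshold, max_def]; split_ifs <;> linarith

lemma softThreshold_sub_antitone {t t' a b : ℝ} (ht : 0 ≤ t) (htt' : t ≤ t') (hba : b ≤ a) :
    softThreshold t' a - softThreshold t' b ≤ softThreshold t a - softThreshold t b := by
  simp only [softThreshold, max_def]; split_ifs <;> linarith

lemma sq_softThreshold {t : ℝ} (ht : 0 ≤ t) (u : ℝ) :
    softThreshold t u ^ 2 = max (u - t) 0 ^ 2 + max (-u - t) 0 ^ 2 := by
  simp only [softThreshold, max_def]; split_ifs <;> nlinarith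

lemma hasDerivAt_max_zero_sq (x : ℝ) : HasDerivAt (fun t : ℝ => max t 0 ^ 2) (2 * max x 0) x := by
  rw [hasDerivAt_iff_isLittleO]
  refine (Asymptotics.IsBigO.of_bound 1 (Filter.Eventually.of_forall fun y => ?_)).trans_isLittleO
    (Asymptotics.isLittleO_pow_sub_sub x one_lt_two)
  simp only [smul_eq_mul, Real.norm_eq_abs, one_mul, sq_abs, abs_sq]
  rw [abs_le]
  constructor <;> simp only [max_def] <;> split_ifs <;> nlinarith

lemma hasDerivAt_softThreshold_sq {t : ℝ} (ht : 0 ≤ t) (u : ℝ) :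
    HasDerivAt (fun u => softThreshold t u ^ 2) (2 * softThreshold t u) u := by
  have hpos := (hasDerivAt_max_zero_sq (u - t)).comp u ((hasDerivAt_id u).sub_const t)
  have hneg := (hasDerivAt_max_zero_sq (-u - t)).comp u ((hasDerivAt_neg u).sub_const t)
  rw [funext (sq_softThreshold ht)]
  refine (hpos.fun_add hneg).congr_deriv ?_
  simp only [softThreshold]
  ring

-- With `S_t = softThreshold t` this gives `f_c′ = 2/(1+c) (S₁ - id) + 2/(c²+c) (S₁ - S_{1+c})`,
-- and the nested increments `0 ≤ ΔS_{1+c} ≤ ΔS₁ ≤ Δu` yield the secant bounds on `f_c′`.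
lemma fsp_eq {c : ℝ} (hc : 0 < c) (u : ℝ) :
    fsp c u = 1 + (softThreshold 1 u ^ 2 - u ^ 2) / (1 + c)
      + (softThreshold 1 u ^ 2 - softThreshold (1 + c) u ^ 2) / (c ^ 2 + c) := by
  have : c ^ 2 + c = c * (1 + c) := by ring
  rw [this]
  unfold fsp softThreshold
  rcases abs_cases u with ⟨hu, _⟩ | ⟨hu, _⟩ <;> rw [hu] <;> simp only [max_def] <;>
    split_ifs <;> first | (exfalso; linarith) | (field_simp; ring)

lemma fspDeriv_eq {c : ℝ} (hc : 0 < c) (u : ℝ) :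
    fspDeriv c u = 2 / (1 + c) * (softThreshold 1 u - u)
      + 2 / (c ^ 2 + c) * (softThreshold 1 u - softThreshold (1 + c) u) := by
  have : c ^ 2 + c = c * (1 + c) := by ring
  rw [this]
  unfold fspDeriv softThreshold
  rcases lt_trichotomy u 0 with hu | rfl | hu
  · rw [abs_of_neg hu, Real.sign_of_neg hu]
    simp only [max_def]
    split_ifs <;> first | (exfalso; linarith) | (field_simp; ring)
  · simp
  · rw [abs_of_pos hu, Real.sign_of_pos hu]
    simp only [max_def]
    split_ifs <;> first | (exfalso; linarith) | (field_simp; ring)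

lemma hasDerivAt_fsp {c : ℝ} (hc : 0 < c) (u : ℝ) : HasDerivAt (fsp c) (fspDeriv c u) u := by
  have h1 := hasDerivAt_softThreshold_sq zero_le_one u
  have h2 := hasDerivAt_softThreshold_sq (by linarith : (0:ℝ) ≤ 1 + c) u
  have h0 := hasDerivAt_pow 2 u
  rw [funext (fsp_eq hc), fspDeriv_eq hc]
  refine ((((h1.fun_sub h0).div_const (1 + c)).const_add 1).fun_add
    ((h1.fun_sub h2).div_const (c ^ 2 + c))).congr_deriv ?_
  push_cast
  ring

lemma fspDeriv_sub_mem_Icc {c : ℝ} (hc : 0 < c) {a b : ℝ} (hba : b ≤ a) :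
    -(2 / (1 + c)) * (a - b) ≤ fspDeriv c a - fspDeriv c b ∧
      fspDeriv c a - fspDeriv c b ≤ 2 / (c ^ 2 + c) * (a - b) := by
  have hκ : 0 < 2 / (1 + c) := by positivity
  have hβ : 0 < 2 / (c ^ 2 + c) := by positivity
  have h2 := softThreshold_sub_nonneg (1 + c) hba
  have h21 := softThreshold_sub_antitone zero_le_one (by linarith : (1:ℝ) ≤ 1 + c) hba
  have h1 := softThreshold_sub_antitone le_rfl zero_le_one hba
  simp only [softThreshold_zero] at h1
  rw [fspDeriv_eq hc, fspDeriv_eq hc]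
  constructor <;> nlinarith

lemma fspDeriv_of_abs_le_one {c u : ℝ} (hu : |u| ≤ 1) : fspDeriv c u = -(2 / (1 + c)) * u := by
  rw [fspDeriv, if_pos hu]
  ring

lemma exists_fspDeriv_sub_eq_mul {c : ℝ} (hc : 0 < c) (a b : ℝ) :
    ∃ h, -(2 / (1 + c)) ≤ h ∧ h ≤ 2 / (c ^ 2 + c) ∧ (|a| ≤ 1 → |b| ≤ 1 → h = -(2 / (1 + c))) ∧
      fspDeriv c a - fspDeriv c b = h * (a - b) := by
  by_cases hab : a = b
  · refine ⟨-(2 / (1 + c)), le_rfl, ?_, fun _ _ => rfl, by simp [hab]⟩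
    have : 0 < 2 / (1 + c) := by positivity
    have : 0 < 2 / (c ^ 2 + c) := by positivity
    linarith
  have slope_mem : ∀ {a b : ℝ}, b < a →
      -(2 / (1 + c)) ≤ slope (fspDeriv c) b a ∧ slope (fspDeriv c) b a ≤ 2 / (c ^ 2 + c) :=
    fun hba => by
      obtain ⟨hlo, hhi⟩ := fspDeriv_sub_mem_Icc hc hba.le
      rw [slope_def_field]
      exact ⟨by rwa [le_div_iff₀ (sub_pos.2 hba)], by rwa [div_le_iff₀ (sub_pos.2 hba)]⟩
  obtain ⟨hlo, hhi⟩ := (lt_or_gt_of_ne hab).elim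
    (fun h => slope_comm (fspDeriv c) a b ▸ slope_mem h) slope_mem
  refine ⟨slope (fspDeriv c) b a, hlo, hhi, fun ha hb => ?_, ?_⟩
  · rw [slope_def_field, fspDeriv_of_abs_le_one ha, fspDeriv_of_abs_le_one hb, ← mul_sub,
      mul_div_cancel_right₀ _ (sub_ne_zero.mpr hab)]
  · rw [mul_comm, ← smul_eq_mul, sub_smul_slope, vsub_eq_sub]

lemma add_deriv_mul_sub_le_of_monotone {f f' : ℝ → ℝ} (hf : ∀ x, HasDerivAt f (f' x) x)
    (hf' : Monotone f') (a b : ℝ) : f a + f' a * (b - a) ≤ f b := by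
  have hcont : Continuous f := continuous_iff_continuousAt.mpr fun x => (hf x).continuousAt
  rcases lt_trichotomy a b with hab | rfl | hab
  · obtain ⟨ξ, hξ, hslope⟩ := exists_hasDerivAt_eq_slope f f' hab hcont.continuousOn
      fun x _ => hf x
    have := hf' hξ.1.le
    rw [hslope, le_div_iff₀ (by linarith)] at this
    linarith
  · simp
  · obtain ⟨ξ, hξ, hslope⟩ := exists_hasDerivAt_eq_slope f f' hab hcont.continuousOn
      fun x _ => hf x
    have := hf' hξ.2.le
    rw [hslope, div_le_iff₀ (by linarith)] at this
    linarith

lemma fsp_add_fspDeriv_mul_sub_le {c : ℝ} (hc : 0 < c) (a b : ℝ) :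
    fsp c a + fspDeriv c a * (b - a) - (b - a) ^ 2 / (1 + c) ≤ fsp c b := by
  have hderiv : ∀ x, HasDerivAt (fun u => fsp c u + u ^ 2 / (1 + c))
      (fspDeriv c x + 2 * x / (1 + c)) x := fun x =>
    ((hasDerivAt_fsp hc x).add ((hasDerivAt_pow 2 x).div_const (1 + c))).congr_deriv
      (by push_cast; ring)
  have hmono : Monotone fun x => fspDeriv c x + 2 * x / (1 + c) := by
    intro x y hxy
    have := (fspDeriv_sub_mem_Icc hc hxy).1
    have : 2 * y / (1 + c) - 2 * x / (1 + c) = 2 / (1 + c) * (y - x) := by ring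
    linarith
  have := add_deriv_mul_sub_le_of_monotone hderiv hmono a b
  have : (b - a) ^ 2 / (1 + c) = b ^ 2 / (1 + c) - a ^ 2 / (1 + c) - 2 * a / (1 + c) * (b - a) := by
    ring
  linarith

lemma fsp_le_one {c : ℝ} (hc : 0 < c) (u : ℝ) : fsp c u ≤ 1 := by
  unfold fsp
  split_ifs
  · have : 0 ≤ u ^ 2 / (1 + c) := by positivity
    linarith
  · rw [div_le_one (by positivity)]
    nlinarith [abs_nonneg u]
  · norm_num

lemma fsp_le_of_one_lt_abs {c u : ℝ} (hc : 0 < c) (hu : 1 < |u|) : fsp c u ≤ 1 - 1 / (1 + c) := by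
  have hc' : 1 - 1 / (1 + c) = c ^ 2 / (c ^ 2 + c) := by field_simp; ring
  rw [fsp, if_neg hu.not_ge, hc']
  split_ifs
  · gcongr ?_ / _
    nlinarith
  · positivity

lemma Fsp_add_gradF_dotProduct_sub_le {m : ℕ} {c σ : ℝ} (hc : 0 < c) (hσ : 0 < σ)
    (s v : Fin m → ℝ) :
    Fsp c σ s + gradF c σ s ⬝ᵥ v - nsq v / (σ ^ 2 * (1 + c)) ≤ Fsp c σ (s + v) := by
  have hterm : ∀ i, fsp c (s i / σ) + gradF c σ s i * v i - v i ^ 2 / (σ ^ 2 * (1 + c))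
      ≤ fsp c ((s + v) i / σ) := fun i => by
    have hstep : (s + v) i / σ - s i / σ = v i / σ := by simp only [Pi.add_apply]; ring
    have := fsp_add_fspDeriv_mul_sub_le hc (s i / σ) ((s + v) i / σ)
    rw [hstep] at this
    convert this using 2
    · simp only [gradF]; field_simp
    · field_simp
  simpa only [Fsp, dotProduct, nsq, sum_div, ← sum_add_distrib, ← sum_sub_distrib] using
    sum_le_sum fun i _ => hterm i

lemma gradF_dotProduct_eq_zero_of_forall_le {m : ℕ} {c σ : ℝ} (hc : 0 < c) {s v : Fin m → ℝ}
    (hmax : ∀ t : ℝ, Fsp c σ (s + t • v) ≤ Fsp c σ s) : gradF c σ s ⬝ᵥ v = 0 := by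
  have hderiv : HasDerivAt (fun t : ℝ => Fsp c σ (s + t • v)) (gradF c σ s ⬝ᵥ v) 0 := by
    refine HasDerivAt.fun_sum fun i _ => ?_
    have hline : HasDerivAt (fun t : ℝ => (s + t • v) i / σ) (v i / σ) 0 := by
      simpa using ((hasDerivAt_mul_const (v i)).const_add (s i)).div_const σ
    refine ((hasDerivAt_fsp hc _).comp 0 hline).congr_deriv ?_
    simp only [zero_smul, add_zero, gradF]
    ring
  refine IsLocalMax.hasDerivAt_eq_zero (Filter.Eventually.of_forall fun t => ?_) hderiv
  simpa using hmax t

lemma two_mul_card_one_lt_abs_le {m n0 : ℕ} {c σ : ℝ} (hc : 0 < c) {s : Fin m → ℝ}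
    (hF : (m : ℝ) - n0 / (2 + 2 * c) ≤ Fsp c σ s) : 2 * #{i | 1 < |s i / σ|} ≤ n0 := by
  set B : Finset (Fin m) := {i | 1 < |s i / σ|}
  have hdeficit : #B * (1 / (1 + c)) ≤ m - Fsp c σ s :=
    calc #B * (1 / (1 + c)) = ∑ i ∈ B, 1 / (1 + c) := by rw [sum_const, nsmul_eq_mul]
      _ ≤ ∑ i ∈ B, (1 - fsp c (s i / σ)) := sum_le_sum fun i hi => by
          have := fsp_le_of_one_lt_abs hc (mem_filter.mp hi).2
          linarith
      _ ≤ ∑ i, (1 - fsp c (s i / σ)) := sum_le_sum_of_subset_of_nonneg (subset_univ B)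
          fun i _ _ => sub_nonneg.mpr (fsp_le_one hc _)
      _ = m - Fsp c σ s := by simp [Fsp, sum_sub_distrib]
  have hB : #B * (1 / (1 + c)) ≤ n0 / 2 * (1 / (1 + c)) := by
    have : (n0 : ℝ) / (2 + 2 * c) = n0 / 2 * (1 / (1 + c)) := by field_simp
    linarith
  have : (2 * #B : ℝ) ≤ n0 := by linarith [le_of_mul_le_mul_right hB (by positivity)]
  exact_mod_cast this

lemma URP.eq_zero_of_mulVec_eq_zero {n m : ℕ} {A : Matrix (Fin n) (Fin m) ℝ} (hA : URP A)
    (hnm : n ≤ m) {w : Fin m → ℝ} (hw : A *ᵥ w = 0) {I : Finset (Fin m)} (hI : #I ≤ n)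
    (hsupp : ∀ i ∉ I, w i = 0) : w = 0 := by
  obtain ⟨K, hIK, -, hK⟩ := exists_subsuperset_card_eq (subset_univ I) hI (by simpa using hnm)
  set g := K.orderEmbOfFin hK
  have hwK : ∀ i ∉ K, w i = 0 := fun i hi => hsupp i fun h => hi (hIK h)
  have hsub : A.submatrix id g *ᵥ (w ∘ g) = A.submatrix id g *ᵥ 0 := by
    ext i
    have hwi : (A *ᵥ w) i = 0 := congrFun hw i
    rw [mulVec_zero, Pi.zero_apply, ← hwi]
    simp only [mulVec, dotProduct, submatrix_apply, id, Function.comp]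
    rw [← sum_subset (subset_univ K) fun k _ hk => by rw [hwK k hk, mul_zero],
      ← K.map_orderEmbOfFin_univ hK, sum_map]
    rfl
  have hv : w ∘ g = 0 := mulVec_injective_iff_isUnit.mpr (hA g g.injective) hsub
  ext k
  by_cases hk : k ∈ K
  · obtain ⟨j, rfl⟩ : k ∈ Set.range g := by rw [K.range_orderEmbOfFin hK]; exact hk
    exact congrFun hv j
  · exact hwK k hk

lemma sum_sq_le_gammaA_mul {n m n0 : ℕ} {A : Matrix (Fin n) (Fin m) ℝ} (hA : URP A)
    (hnm : n ≤ m) (hn0 : n0 ≤ n) (hbdd : BddAbove (gammaSet A n0)) {w : Fin m → ℝ}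
    (hw : A *ᵥ w = 0) {I : Finset (Fin m)} (hI : #I ≤ n0) :
    ∑ i ∈ I, w i ^ 2 ≤ gammaA A n0 * ∑ i ∈ Iᶜ, w i ^ 2 := by
  by_cases hw0 : w = 0
  · simp [hw0]
  have hpos : 0 < ∑ i ∈ Iᶜ, w i ^ 2 := by
    refine (sum_nonneg fun i _ => sq_nonneg _).lt_of_ne fun h => hw0 ?_
    refine hA.eq_zero_of_mulVec_eq_zero hnm hw (hI.trans hn0) fun i hi => ?_
    exact pow_eq_zero_iff two_ne_zero |>.mp
      ((sum_eq_zero_iff_of_nonneg fun i _ => sq_nonneg _).mp h.symm i (mem_compl.mpr hi))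
  rw [← div_le_iff₀ hpos]
  exact le_csSup hbdd ⟨I, w, hI, hw, hw0, rfl⟩

lemma nsq_smul {ι : Type*} [Fintype ι] (c : ℝ) (v : ι → ℝ) : nsq (c • v) = c ^ 2 * nsq v := by
  simp [nsq, mul_sum, mul_pow]

lemma two_mul_sum_mul_mul_le {ι : Type*} [Fintype ι] {K : Submodule ℝ (ι → ℝ)} {D : ι → ℝ}
    {C : ℝ} (hQ : ∀ w ∈ K, |∑ i, D i * w i ^ 2| ≤ C * nsq w) {u v : ι → ℝ} (hu : u ∈ K)
    (hv : v ∈ K) : 2 * ∑ i, D i * u i * v i ≤ C * (nsq u + nsq v) := by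
  have hadd := (abs_le.mp (hQ _ (K.add_mem hu hv))).2
  have hsub := (abs_le.mp (hQ _ (K.sub_mem hu hv))).1
  have hpolar : ∑ i, D i * (u + v) i ^ 2 - ∑ i, D i * (u - v) i ^ 2 = 4 * ∑ i, D i * u i * v i := by
    rw [← sum_sub_distrib, mul_sum]
    exact sum_congr rfl fun i _ => by simp only [Pi.add_apply, Pi.sub_apply]; ring
  have hparallel : C * nsq (u + v) + C * nsq (u - v) = 2 * (C * (nsq u + nsq v)) := by
    simp only [nsq, ← mul_add, ← sum_add_distrib, mul_sum]
    exact sum_congr rfl fun i _ => by simp only [Pi.add_apply, Pi.sub_apply]; ring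
  linarith

lemma abs_sum_mul_sq_le {ι : Type*} [Fintype ι] [DecidableEq ι] (I : Finset ι) {D w : ι → ℝ}
    {a b C γ : ℝ} (hlo : ∀ i, a ≤ D i) (hhi : ∀ i, D i ≤ b) (hout : ∀ i ∉ I, D i = a)
    (hw : ∑ i ∈ I, w i ^ 2 ≤ γ * ∑ i ∈ Iᶜ, w i ^ 2) (hCa : -C ≤ a) (hCb : C ≤ b)
    (hbal : (b - C) * γ ≤ C - a) : |∑ i, D i * w i ^ 2| ≤ C * nsq w := by
  have hsplit := (sum_add_sum_compl I fun i => D i * w i ^ 2).symm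
  have hnsq : nsq w = ∑ i ∈ I, w i ^ 2 + ∑ i ∈ Iᶜ, w i ^ 2 := (sum_add_sum_compl I _).symm
  have hIc : ∑ i ∈ Iᶜ, D i * w i ^ 2 = a * ∑ i ∈ Iᶜ, w i ^ 2 := by
    rw [mul_sum]
    exact sum_congr rfl fun i hi => by rw [hout i (mem_compl.mp hi)]
  have hI : ∑ i ∈ I, D i * w i ^ 2 ≤ b * ∑ i ∈ I, w i ^ 2 := by
    rw [mul_sum]
    exact sum_le_sum fun i _ => mul_le_mul_of_nonneg_right (hhi i) (sq_nonneg _)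
  have hall : a * nsq w ≤ ∑ i, D i * w i ^ 2 := by
    rw [nsq, mul_sum]
    exact sum_le_sum fun i _ => mul_le_mul_of_nonneg_right (hlo i) (sq_nonneg _)
  have hS : 0 ≤ ∑ i ∈ Iᶜ, w i ^ 2 := sum_nonneg fun i _ => sq_nonneg _
  have hnsq0 : 0 ≤ nsq w := sum_nonneg fun i _ => sq_nonneg _
  rw [abs_le]
  constructor
  · linarith [mul_le_mul_of_nonneg_right hCa hnsq0]
  · rw [hsplit, hIc, hnsq]
    linarith [mul_le_mul_of_nonneg_left hw (sub_nonneg.2 hCb), mul_le_mul_of_nonneg_right hbal hS]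

lemma stepSize_pos_le {γ γ' lmax lmin μ : ℝ} (hγ : 0 < γ) (hγ' : γ < γ')
    (hlmax : lmax = 2 / (1 + γ)) (hlmin : lmin = 2 * (γ' - γ) / ((1 + γ) * (γ' + γ' ^ 2)))
    (hμ : μ = 2 / (lmin + lmax)) : 0 < μ ∧ μ ≤ 1 + γ' := by
  have hlmax_pos : 0 < lmax := by rw [hlmax]; exact div_pos two_pos (by linarith)
  have hlmin_pos : 0 < lmin := by
    rw [hlmin]; exact div_pos (by linarith) (mul_pos (by linarith) (by nlinarith))
  refine ⟨by rw [hμ]; positivity, ?_⟩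
  calc μ ≤ 2 / lmax := by rw [hμ]; gcongr; linarith
    _ = 1 + γ := by rw [hlmax]; field_simp
    _ ≤ 1 + γ' := by linarith

lemma contractionFactor_bounds {γ γ' lmax lmin μ CR : ℝ} (hγ : 0 < γ) (hγ' : γ < γ')
    (hlmax : lmax = 2 / (1 + γ)) (hlmin : lmin = 2 * (γ' - γ) / ((1 + γ) * (γ' + γ' ^ 2)))
    (hμ : μ = 2 / (lmin + lmax)) (hCR : CR = (lmax - lmin) / (lmax + lmin)) :
    0 < CR ∧ -CR ≤ 1 - μ * (2 / (1 + γ')) ∧ CR ≤ 1 + μ * (2 / (γ' ^ 2 + γ')) ∧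
      (1 + μ * (2 / (γ' ^ 2 + γ')) - CR) * γ = CR - (1 - μ * (2 / (1 + γ'))) := by
  have hγ'0 : 0 < γ' := hγ.trans hγ'
  have hlmin_pos : 0 < lmin := by rw [hlmin]; exact div_pos (by linarith) (by positivity)
  have hlmin_lt : lmin < lmax := by
    rw [hlmin, hlmax, div_lt_div_iff₀ (by positivity) (by positivity)]
    nlinarith
  have hsum : lmin + lmax ≠ 0 := by linarith
  have hμmax : μ * lmax = 1 + CR := by
    rw [hμ, hCR, add_comm lmax lmin]; field_simp; ring
  have hμmin : μ * lmin = 1 - CR := by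
    rw [hμ, hCR, add_comm lmax lmin]; field_simp; ring
  have hμ0 : 0 < μ := by rw [hμ]; exact div_pos two_pos (by linarith)
  have hL1 : 2 / (1 + γ') ≤ lmax := by rw [hlmax]; gcongr
  -- This identity is what fixes `lmin`.
  have hbal : 2 / (1 + γ') - lmin = γ * (2 / (γ' ^ 2 + γ') + lmin) := by
    rw [hlmin]; field_simp; ring
  have hL2 : 0 < 2 / (γ' ^ 2 + γ') := by positivity
  refine ⟨by rw [hCR]; exact div_pos (by linarith) (by linarith), ?_, ?_, ?_⟩
  · nlinarith [mul_le_mul_of_nonneg_left hL1 hμ0.le]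
  · nlinarith [mul_pos hμ0 hL2]
  · linear_combination -μ * hbal - (γ + 1) * hμmin

section Projection

variable {n m : ℕ} {A : Matrix (Fin n) (Fin m) ℝ} {P : (Fin m → ℝ) →ₗ[ℝ] (Fin m → ℝ)}

lemma proj_dotProduct_of_mulVec_eq_zero (hP2 : ∀ v, A *ᵥ v = 0 → P v = v)
    (hP3 : ∀ v w : Fin m → ℝ, P v ⬝ᵥ w = v ⬝ᵥ P w) (v : Fin m → ℝ) {w : Fin m → ℝ}
    (hw : A *ᵥ w = 0) : P v ⬝ᵥ w = v ⬝ᵥ w := by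
  rw [hP3, hP2 w hw]

lemma proj_eq_zero_of_dotProduct_eq_zero (hP1 : ∀ v, A *ᵥ P v = 0)
    (hP2 : ∀ v, A *ᵥ v = 0 → P v = v) (hP3 : ∀ v w : Fin m → ℝ, P v ⬝ᵥ w = v ⬝ᵥ P w)
    {g : Fin m → ℝ} (hg : ∀ v, A *ᵥ v = 0 → g ⬝ᵥ v = 0) : P g = 0 :=
  dotProduct_self_eq_zero.mp <| by
    rw [proj_dotProduct_of_mulVec_eq_zero hP2 hP3 g (hP1 g)]
    exact hg _ (hP1 g)

lemma proj_gradF_eq_zero_of_forall_le {c σ : ℝ} (hc : 0 < c) (hP1 : ∀ v, A *ᵥ P v = 0)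
    (hP2 : ∀ v, A *ᵥ v = 0 → P v = v) (hP3 : ∀ v w : Fin m → ℝ, P v ⬝ᵥ w = v ⬝ᵥ P w)
    {x : Fin n → ℝ} {s : Fin m → ℝ} (hsx : A *ᵥ s = x)
    (hmax : ∀ s', A *ᵥ s' = x → Fsp c σ s' ≤ Fsp c σ s) : P (gradF c σ s) = 0 :=
  proj_eq_zero_of_dotProduct_eq_zero hP1 hP2 hP3 fun v hv =>
    gradF_dotProduct_eq_zero_of_forall_le hc fun t =>
      hmax _ (by rw [mulVec_add, mulVec_smul, hv, smul_zero, add_zero, hsx])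

lemma Fsp_le_Fsp_add_smul_proj_gradF {c σ τ : ℝ} (hc : 0 < c) (hσ : 0 < σ)
    (hP1 : ∀ v, A *ᵥ P v = 0) (hP2 : ∀ v, A *ᵥ v = 0 → P v = v)
    (hP3 : ∀ v w : Fin m → ℝ, P v ⬝ᵥ w = v ⬝ᵥ P w) (s : Fin m → ℝ) (hτ0 : 0 ≤ τ)
    (hτ : τ ≤ 1 + c) : Fsp c σ s ≤ Fsp c σ (s + (τ * σ ^ 2) • P (gradF c σ s)) := by
  set p := P (gradF c σ s)
  have hgp : gradF c σ s ⬝ᵥ p = p ⬝ᵥ p :=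
    (proj_dotProduct_of_mulVec_eq_zero hP2 hP3 _ (hP1 _)).symm
  have hgain := Fsp_add_gradF_dotProduct_sub_le hc hσ s ((τ * σ ^ 2) • p)
  rw [dotProduct_smul, hgp, nsq_smul, nsq_eq_dotProduct, smul_eq_mul] at hgain
  have hN : 0 ≤ τ * σ ^ 2 * (p ⬝ᵥ p) := mul_nonneg (by positivity) (dotProduct_self_star_nonneg p)
  have hloss : (τ * σ ^ 2) ^ 2 * (p ⬝ᵥ p) / (σ ^ 2 * (1 + c))
      = τ * σ ^ 2 * (p ⬝ᵥ p) * (τ / (1 + c)) := by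
    field_simp
  have := mul_le_mul_of_nonneg_left ((div_le_one (by linarith)).2 hτ) hN
  linarith

lemma add_smul_proj_gradF_sub_eq (hP2 : ∀ v, A *ᵥ v = 0 → P v = v) {c σ μ : ℝ} (hσ : σ ≠ 0)
    {s s' h : Fin m → ℝ} (hPs' : P (gradF c σ s') = 0) (hd : A *ᵥ (s - s') = 0)
    (hsec : ∀ i, fspDeriv c (s i / σ) - fspDeriv c (s' i / σ) = h i * (s i / σ - s' i / σ)) :
    s + (μ * σ ^ 2) • P (gradF c σ s) - s' = P fun i => (1 + μ * h i) * (s - s') i := by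
  have hgrad : gradF c σ s = gradF c σ s' + (σ ^ 2)⁻¹ • fun i => h i * (s - s') i := by
    funext i
    simp only [gradF, Pi.add_apply, Pi.smul_apply, Pi.sub_apply, smul_eq_mul]
    rw [eq_add_of_sub_eq' (hsec i)]
    field_simp
  have hweights : (fun i => (1 + μ * h i) * (s - s') i)
      = (s - s') + μ • fun i => h i * (s - s') i := by
    funext i
    simp only [Pi.add_apply, Pi.smul_apply, smul_eq_mul]
    ring
  rw [hgrad, map_add, hPs', zero_add, map_smul, smul_smul, hweights, map_add, map_smul,
    hP2 _ hd, show μ * σ ^ 2 * (σ ^ 2)⁻¹ = μ by field_simp]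
  abel

lemma sqrt_nsq_proj_mul_le (hP1 : ∀ v, A *ᵥ P v = 0) (hP2 : ∀ v, A *ᵥ v = 0 → P v = v)
    (hP3 : ∀ v w : Fin m → ℝ, P v ⬝ᵥ w = v ⬝ᵥ P w) {D : Fin m → ℝ} {C : ℝ} (hC : 0 < C)
    (hQ : ∀ w, A *ᵥ w = 0 → |∑ i, D i * w i ^ 2| ≤ C * nsq w) {d : Fin m → ℝ}
    (hd : A *ᵥ d = 0) : √(nsq (P fun i => D i * d i)) ≤ C * √(nsq d) := by
  -- `‖y‖² = ⟪D ⊙ d, y⟫` as `y ∈ ker A`; polarization at `(C • d, y)` then gives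
  -- `2C ‖y‖² ≤ C (C² ‖d‖² + ‖y‖²)`.
  set y := P fun i => D i * d i
  have hy : A *ᵥ y = 0 := hP1 _
  have hyy : nsq y = ∑ i, D i * d i * y i := by
    rw [nsq_eq_dotProduct]
    exact proj_dotProduct_of_mulVec_eq_zero hP2 hP3 _ hy
  have hpolar := two_mul_sum_mul_mul_le (K := LinearMap.ker A.mulVecLin)
    (fun w hw => hQ w (by simpa using hw)) (u := C • d) (v := y) (by simp [hd])
    (by simpa using hy)
  have hscale : ∑ i, D i * (C • d) i * y i = C * nsq y := by
    rw [hyy, mul_sum]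
    exact sum_congr rfl fun i _ => by simp only [Pi.smul_apply, smul_eq_mul]; ring
  rw [hscale, nsq_smul] at hpolar
  have hle : nsq y ≤ C ^ 2 * nsq d := by nlinarith
  calc √(nsq y) ≤ √(C ^ 2 * nsq d) := Real.sqrt_le_sqrt hle
    _ = C * √(nsq d) := by rw [Real.sqrt_mul (sq_nonneg C), Real.sqrt_sq hC.le]

end Projection

theorem stmt_18_general {n m : ℕ} (hnm : n < m) (A : Matrix (Fin n) (Fin m) ℝ)
    (hURP : URP A)
    (n0 : ℕ) (hn0 : n0 ≤ n)
    (γ : ℝ) (hγ : γ = gammaA A n0) (hγpos : 0 < γ) (hbdd : BddAbove (gammaSet A n0))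
    (γ' : ℝ) (hγ' : γ < γ') (σ : ℝ) (hσ : 0 < σ) (x : Fin n → ℝ)
    (lmax lmin μ CR : ℝ)
    (hlmax : lmax = 2 / (1 + γ))
    (hlmin : lmin = 2 * (γ' - γ) / ((1 + γ) * (γ' + γ' ^ 2)))
    (hμ : μ = 2 / (lmin + lmax))
    (hCR : CR = (lmax - lmin) / (lmax + lmin))
    (P : (Fin m → ℝ) →ₗ[ℝ] (Fin m → ℝ))
    (hP1 : ∀ v, A.mulVec (P v) = 0)
    (hP2 : ∀ v, A.mulVec v = 0 → P v = v)
    (hP3 : ∀ v w : Fin m → ℝ, ∑ i, P v i * w i = ∑ i, v i * P w i)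
    (sopt : Fin m → ℝ) (hsoptx : A.mulVec sopt = x)
    (hsopt : ∀ s : Fin m → ℝ, A.mulVec s = x → Fsp γ' σ s ≤ Fsp γ' σ sopt)
    (si : Fin m → ℝ) (hsix : A.mulVec si = x)
    (hFi : (m : ℝ) - n0 / (2 + 2 * γ') ≤ Fsp γ' σ si)
    (snext : Fin m → ℝ) (hsnext : snext = si + (μ * σ ^ 2) • P (gradF γ' σ si)) :
    Real.sqrt (nsq (snext - sopt)) ≤ CR * Real.sqrt (nsq (si - sopt)) ∧
      Fsp γ' σ si ≤ Fsp γ' σ snext := by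
  have hγ'pos : 0 < γ' := hγpos.trans hγ'
  obtain ⟨hμpos, hμle⟩ := stepSize_pos_le hγpos hγ' hlmax hlmin hμ
  refine ⟨?_, hsnext ▸ Fsp_le_Fsp_add_smul_proj_gradF hγ'pos hσ hP1 hP2 hP3 si hμpos.le hμle⟩
  obtain ⟨hCRpos, hCRa, hCRb, hCRbal⟩ := contractionFactor_bounds hγpos hγ' hlmax hlmin hμ hCR
  have hPopt := proj_gradF_eq_zero_of_forall_le hγ'pos hP1 hP2 hP3 hsoptx hsopt
  set I := ({i | 1 < |si i / σ|} : Finset (Fin m)) ∪ ({i | 1 < |sopt i / σ|} : Finset (Fin m))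
  have hI : #I ≤ n0 := by
    have := two_mul_card_one_lt_abs_le hγ'pos hFi
    have := two_mul_card_one_lt_abs_le hγ'pos (hFi.trans (hsopt si hsix))
    exact (card_union_le _ _).trans (by omega)
  choose h hlo hhi hsmall hsec using fun i =>
    exists_fspDeriv_sub_eq_mul hγ'pos (si i / σ) (sopt i / σ)
  have hQ : ∀ w, A *ᵥ w = 0 → |∑ i, (1 + μ * h i) * w i ^ 2| ≤ CR * nsq w := fun w hw =>
    abs_sum_mul_sq_le I (fun i => by nlinarith [hlo i]) (fun i => by nlinarith [hhi i])
      (fun i hi => by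
        simp only [I, mem_union, mem_filter, mem_univ, true_and, not_or, not_lt] at hi
        rw [hsmall i hi.1 hi.2]
        ring)
      (hγ ▸ sum_sq_le_gammaA_mul hURP hnm.le hn0 hbdd hw hI) hCRa hCRb hCRbal.le
  have hd : A *ᵥ (si - sopt) = 0 := by rw [mulVec_sub, hsix, hsoptx, sub_self]
  rw [hsnext, add_smul_proj_gradF_sub_eq hP2 hσ.ne' hPopt hd hsec]
  exact sqrt_nsq_proj_mul_le hP1 hP2 hP3 hCRpos hQ hd

/-- one projected steepest-ascent step with step size
μ = 2/(λ′_min + λ′_max) contracts the distance to the maximizer s_opt of F = F_{γ′,σ}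
by the factor CR′ = (λ′_max − λ′_min)/(λ′_max + λ′_min), and does not decrease F. -/
theorem stmt_18 {n m : ℕ} (hnm : n < m) (A : Matrix (Fin n) (Fin m) ℝ)
    (hURP : URP A) (horth : A * A.transpose = 1)
    (n0 : ℕ) (hn1 : 1 ≤ n0) (hn0 : n0 ≤ n)
    (γ : ℝ) (hγ : γ = gammaA A n0) (hγpos : 0 < γ) (hbdd : BddAbove (gammaSet A n0))
    (γ' : ℝ) (hγ' : γ < γ') (σ : ℝ) (hσ : 0 < σ) (x : Fin n → ℝ)
    (lmax lmin μ CR : ℝ)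
    (hlmax : lmax = 2 / (1 + γ))
    (hlmin : lmin = 2 * (γ' - γ) / ((1 + γ) * (γ' + γ' ^ 2)))
    (hμ : μ = 2 / (lmin + lmax))
    (hCR : CR = (lmax - lmin) / (lmax + lmin))
    (P : (Fin m → ℝ) →ₗ[ℝ] (Fin m → ℝ))
    (hP1 : ∀ v, A.mulVec (P v) = 0)
    (hP2 : ∀ v, A.mulVec v = 0 → P v = v)
    (hP3 : ∀ v w : Fin m → ℝ, ∑ i, P v i * w i = ∑ i, v i * P w i)
    (sopt : Fin m → ℝ) (hsoptx : A.mulVec sopt = x)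
    (hsopt : ∀ s : Fin m → ℝ, A.mulVec s = x → Fsp γ' σ s ≤ Fsp γ' σ sopt)
    (si : Fin m → ℝ) (hsix : A.mulVec si = x)
    (hFi : (m : ℝ) - n0 / (2 + 2 * γ') ≤ Fsp γ' σ si)
    (snext : Fin m → ℝ) (hsnext : snext = si + (μ * σ ^ 2) • P (gradF γ' σ si)) :
    Real.sqrt (nsq (snext - sopt)) ≤ CR * Real.sqrt (nsq (si - sopt)) ∧
      Fsp γ' σ si ≤ Fsp γ' σ snext :=
  stmt_18_general hnm A hURP n0 hn0 γ hγ hγpos hbdd γ' hγ' σ hσ x lmax lmin μ CR hlmax hlmin hμ hCR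
    P hP1 hP2 hP3 sopt hsoptx hsopt si hsix hFi snext hsnext
end
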